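/- Let Z be a polynomial in variables c₁,…,c_d with nonnegative coefficients such that the differences of its exponent vectors span ℝ^d. Then log Z, as a function of (log c₁, …, log c_d) on ℝ^d, is strictly convex, and therefore the gradient map ∇log Z (with respect to the log variables) is injective. -/

import Mathlib

/-!
With `u = L t` for the linear map `L t = (∑ j, α i j * t j)ᵢ`, `log Z = log ∑ᵢ aᵢ exp uᵢ`.
Shifting `u` and `v` by their log-sum-exp values normalizes both sums to `1`, and then strict
convexity of `exp`, applied termwise, gives the strict Hölder inequality
`log ∑ aᵢ exp (x uᵢ + y vᵢ) < x log ∑ aᵢ exp uᵢ + y log ∑ aᵢ exp vᵢ` unless `u - v` is constant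
on the support of `a`. For `u - v = L (t - s)` the spanning hypothesis excludes this whenever
`t ≠ s`. Restricting a strictly convex differentiable function to the segment from `s` to `t`
and comparing one-sided slopes gives `∇f(s) · (t - s) < ∇f(t) · (t - s)`, so the gradient is
injective.
-/

open Finset

/-- The value of the polynomial `Z(c) = ∑_i a_i c^{α_i}` at `c_j = exp (t_j)`. -/
noncomputable def polyVal {ι : Type*} [Fintype ι] {d : ℕ} (a : ι → ℝ)
    (α : ι → Fin d → ℕ) (t : Fin d → ℝ) : ℝ :=
  ∑ i, a i * Real.exp (∑ j, (α i j : ℝ) * t j)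

open Set Real Matrix

theorem StrictConvexOn.comp_lineMap {E : Type*} [AddCommGroup E] [Module ℝ E] {s : Set E}
    {f : E → ℝ} {x y : E} (hf : StrictConvexOn ℝ s f) (hx : x ∈ s) (hy : y ∈ s)
    (hxy : x ≠ y) : StrictConvexOn ℝ (Set.Icc (0 : ℝ) 1) (fun r => f (AffineMap.lineMap x y r)) := by
  refine ⟨convex_Icc 0 1, fun r₁ hr₁ r₂ hr₂ hr a b ha hb hab => ?_⟩
  dsimp only
  rw [Convex.combo_affine_apply hab]
  exact hf.2 (hf.1.lineMap_mem hx hy hr₁) (hf.1.lineMap_mem hx hy hr₂)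
    ((AffineMap.lineMap_injective ℝ hxy).ne hr) ha hb hab

theorem StrictConvexOn.apply_sub_lt_of_hasFDerivAt {E : Type*} [NormedAddCommGroup E]
    [NormedSpace ℝ E] {s : Set E} {f : E → ℝ} {x y : E} {f'x f'y : E →L[ℝ] ℝ}
    (hf : StrictConvexOn ℝ s f) (hx : x ∈ s) (hy : y ∈ s) (hxy : x ≠ y)
    (hfx : HasFDerivAt f f'x x) (hfy : HasFDerivAt f f'y y) :
    f'y (x - y) < f'x (x - y) := by
  have hline : ∀ {z : E} {f'z : E →L[ℝ] ℝ} (r : ℝ), AffineMap.lineMap y x r = z →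
      HasFDerivAt f f'z z → HasDerivAt (fun r => f (AffineMap.lineMap y x r)) (f'z (x - y)) r :=
    fun r hr hfz => (hr ▸ hfz).comp_hasDerivAt r AffineMap.hasDerivAt_lineMap
  have hg := hf.comp_lineMap hy hx hxy.symm
  have h01 : (0 : ℝ) ∈ Set.Icc 0 1 := left_mem_Icc.2 zero_le_one
  have h11 : (1 : ℝ) ∈ Set.Icc 0 1 := right_mem_Icc.2 zero_le_one
  exact (hg.lt_slope_of_hasDerivAt h01 h11 one_pos
    (hline 0 (AffineMap.lineMap_apply_zero y x) hfy)).trans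
    (hg.slope_lt_of_hasDerivAt h01 h11 one_pos (hline 1 (AffineMap.lineMap_apply_one y x) hfx))

theorem HasFDerivAt.deriv_add_mul_ite_eq_apply_single {n : Type*} [Fintype n] [DecidableEq n]
    {f : (n → ℝ) → ℝ} {f' : (n → ℝ) →L[ℝ] ℝ} {t : n → ℝ} (hf : HasFDerivAt f f' t) (i : n) :
    deriv (fun s => f (fun k => t k + s * (if k = i then 1 else 0))) 0 = f' (Pi.single i 1) := by
  have hcurve : HasDerivAt (fun s : ℝ => fun k => t k + s * (if k = i then 1 else 0))
      (Pi.single i 1) 0 :=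
    hasDerivAt_pi.2 fun k => by
      convert ((hasDerivAt_id (0 : ℝ)).mul_const (if k = i then (1 : ℝ) else 0)).const_add (t k)
        using 1 <;> simp [Pi.single_apply]
  exact (hf.comp_hasDerivAt_of_eq 0 hcurve (by simp)).deriv

theorem StrictConvexOn.injective_partialDeriv {n : Type*} [Fintype n] [DecidableEq n]
    {f : (n → ℝ) → ℝ} (hf : StrictConvexOn ℝ univ f) (hdf : Differentiable ℝ f) :
    Function.Injective fun (t : n → ℝ) (i : n) =>
      deriv (fun s => f (fun k => t k + s * (if k = i then 1 else 0))) 0 := by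
  intro t u h
  by_contra htu
  have hgrad : fderiv ℝ f t = fderiv ℝ f u := by
    refine ContinuousLinearMap.coe_injective ((Pi.basisFun ℝ n).ext fun i => ?_)
    have hi := congrFun h i
    dsimp only at hi
    rw [(hdf t).hasFDerivAt.deriv_add_mul_ite_eq_apply_single,
      (hdf u).hasFDerivAt.deriv_add_mul_ite_eq_apply_single] at hi
    simpa using hi
  exact (hf.apply_sub_lt_of_hasFDerivAt trivial trivial htu (hdf t).hasFDerivAt
    (hdf u).hasFDerivAt).ne (by rw [hgrad])

theorem Matrix.exists_mulVec_ne_of_span_sub_eq_top {R ι n : Type*} [Field R] [LinearOrder R]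
    [IsStrictOrderedRing R] [Fintype n] (M : Matrix ι n R) (p : ι → Prop)
    (hM : Submodule.span R {x | ∃ i i', p i ∧ p i' ∧ x = M i - M i'} = ⊤) {w : n → R}
    (hw : w ≠ 0) : ∃ i i', p i ∧ p i' ∧ (M *ᵥ w) i ≠ (M *ᵥ w) i' := by
  by_contra! h
  have hperp : (dotProductBilin R R).flip w = 0 := by
    refine LinearMap.ext_on hM ?_
    rintro _ ⟨i, i', hi, hi', rfl⟩
    simpa [sub_dotProduct, sub_eq_zero, mulVec] using h i i' hi hi'
  exact hw (dotProduct_self_eq_zero.1 (LinearMap.congr_fun hperp w))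

section LogSumExp

variable {ι : Type*} [Fintype ι] {a : ι → ℝ}

noncomputable def logSumExp (a u : ι → ℝ) : ℝ :=
  log (∑ i, a i * exp (u i))

theorem sum_mul_exp_pos (ha : ∀ i, 0 ≤ a i) (hne : ∃ i, a i ≠ 0) (u : ι → ℝ) :
    0 < ∑ i, a i * exp (u i) := by
  obtain ⟨i, hi⟩ := hne
  exact sum_pos' (fun j _ => mul_nonneg (ha j) (exp_pos _).le)
    ⟨i, mem_univ i, mul_pos ((ha i).lt_of_ne' hi) (exp_pos _)⟩

theorem sum_mul_exp_sub_logSumExp (ha : ∀ i, 0 ≤ a i) (hne : ∃ i, a i ≠ 0) (u : ι → ℝ) :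
    ∑ i, a i * exp (u i - logSumExp a u) = 1 := by
  simp_rw [exp_sub, ← mul_div_assoc, ← sum_div, logSumExp, exp_log (sum_mul_exp_pos ha hne u)]
  exact div_self (sum_mul_exp_pos ha hne u).ne'

theorem sum_mul_exp_convexCombo_lt (ha : ∀ i, 0 ≤ a i) {u v : ι → ℝ} {x y : ℝ} (hx : 0 < x)
    (hy : 0 < y) (hxy : x + y = 1) (huv : ∃ i, a i ≠ 0 ∧ u i ≠ v i) :
    ∑ i, a i * exp (x * u i + y * v i) < x * ∑ i, a i * exp (u i) + y * ∑ i, a i * exp (v i) := by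
  obtain ⟨k, hk, hkuv⟩ := huv
  rw [mul_sum, mul_sum, ← sum_add_distrib]
  refine sum_lt_sum (fun i _ => ?_) ⟨k, mem_univ k, ?_⟩
  · have := convexOn_exp.2 (mem_univ (u i)) (mem_univ (v i)) hx.le hy.le hxy
    simp only [smul_eq_mul] at this
    nlinarith [ha i]
  · have := strictConvexOn_exp.2 (mem_univ (u k)) (mem_univ (v k)) hkuv hx hy hxy
    simp only [smul_eq_mul] at this
    nlinarith [(ha k).lt_of_ne' hk]

theorem logSumExp_convexCombo_lt (ha : ∀ i, 0 ≤ a i) {u v : ι → ℝ} {x y : ℝ} (hx : 0 < x)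
    (hy : 0 < y) (hxy : x + y = 1) (huv : ∃ i j, a i ≠ 0 ∧ a j ≠ 0 ∧ u i - v i ≠ u j - v j) :
    logSumExp a (x • u + y • v) < x * logSumExp a u + y * logSumExp a v := by
  obtain ⟨i, j, hi, hj, hij⟩ := huv
  have hne : ∃ i, a i ≠ 0 := ⟨i, hi⟩
  set U := logSumExp a u
  set V := logSumExp a v
  have hk : ∃ k, a k ≠ 0 ∧ u k - U ≠ v k - V := by
    by_contra! h
    exact hij (by linarith [h i hi, h j hj])
  rw [logSumExp, log_lt_iff_lt_exp (sum_mul_exp_pos ha hne _)]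
  calc ∑ k, a k * exp ((x • u + y • v) k)
      = exp (x * U + y * V) * ∑ k, a k * exp (x * (u k - U) + y * (v k - V)) := by
        rw [mul_sum]
        refine sum_congr rfl fun k _ => ?_
        rw [mul_left_comm, ← exp_add]
        simp only [Pi.add_apply, Pi.smul_apply, smul_eq_mul]
        ring_nf
    _ < exp (x * U + y * V) * (x * ∑ k, a k * exp (u k - U) + y * ∑ k, a k * exp (v k - V)) :=
        mul_lt_mul_of_pos_left (sum_mul_exp_convexCombo_lt ha hx hy hxy hk) (exp_pos _)
    _ = exp (x * U + y * V) := by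
        rw [sum_mul_exp_sub_logSumExp ha hne, sum_mul_exp_sub_logSumExp ha hne, mul_one, mul_one,
          hxy, mul_one]

theorem strictConvexOn_logSumExp_comp {E : Type*} [AddCommGroup E] [Module ℝ E]
    (ha : ∀ i, 0 ≤ a i) (L : E →ₗ[ℝ] ι → ℝ)
    (hL : ∀ w ≠ 0, ∃ i j, a i ≠ 0 ∧ a j ≠ 0 ∧ L w i ≠ L w j) :
    StrictConvexOn ℝ univ fun t => logSumExp a (L t) := by
  refine ⟨convex_univ, fun t _ s _ hts x y hx hy hxy => ?_⟩
  obtain ⟨i, j, hi, hj, hij⟩ := hL (t - s) (sub_ne_zero.2 hts)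
  simp only [map_add, map_smul, smul_eq_mul]
  exact logSumExp_convexCombo_lt ha hx hy hxy ⟨i, j, hi, hj, by simpa using hij⟩

end LogSumExp

theorem differentiable_log_polyVal {ι : Type*} [Fintype ι] {d : ℕ} {a : ι → ℝ}
    (α : ι → Fin d → ℕ) (ha : ∀ i, 0 ≤ a i) (hne : ∃ i, a i ≠ 0) :
    Differentiable ℝ fun t => log (polyVal a α t) := fun t =>
  (by unfold polyVal; fun_prop : DifferentiableAt ℝ (polyVal a α) t).log
    (sum_mul_exp_pos ha hne _).ne'

/-- If the differences of exponent vectors of `Z` span `ℝ^d`, then `log Z` is strictly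
convex in the log variables, so its gradient map is injective. -/
theorem logZ_strictConvex_and_gradient_injective
    {ι : Type*} [Fintype ι] {d : ℕ} (a : ι → ℝ) (α : ι → Fin d → ℕ)
    (ha : ∀ i, 0 ≤ a i) (hne : ∃ i, a i ≠ 0)
    (hspan : Submodule.span ℝ
        {x : Fin d → ℝ | ∃ i i', a i ≠ 0 ∧ a i' ≠ 0 ∧
          x = fun j => (α i j : ℝ) - (α i' j : ℝ)} = ⊤) :
    StrictConvexOn ℝ Set.univ (fun t => Real.log (polyVal a α t))
    ∧ Function.Injective (fun t : Fin d → ℝ => fun i : Fin d =>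
        deriv (fun s => Real.log (polyVal a α
          (fun k => t k + s * (if k = i then 1 else 0)))) 0) := by
  let M : Matrix ι (Fin d) ℝ := fun i j => α i j
  -- `log (polyVal a α t)` unfolds to `logSumExp a (M *ᵥ t)`.
  have hconv : StrictConvexOn ℝ univ fun t => log (polyVal a α t) :=
    strictConvexOn_logSumExp_comp ha M.mulVecLin fun _ hw =>
      M.exists_mulVec_ne_of_span_sub_eq_top (fun i => a i ≠ 0) hspan hw
  exact ⟨hconv, hconv.injective_partialDeriv (differentiable_log_polyVal α ha hne)⟩
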